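/- arXiv:2501.06640 — 13 statements merged into one kernel-verified Lean document; each statement's English description precedes it below -/
import Mathlib

section
/- Let X be a Banach space, Ω ⊆ X, f_i : X → ℝ for i = 1,…,p, and uncertainty sets U_i ⊆ X* that are open in the weak* topology. If x̄ ∈ Ω is a highly robust weakly efficient solution (i.e., for every u ∈ U = ∏ U_i there is no x ∈ Ω with f_i(x) − ⟨u_i, x⟩ < f_i(x̄) − ⟨u_i, x̄⟩ for all i), then x̄ is a highly robust strictly efficient solution (i.e., for every u ∈ U there is no x ∈ Ω, x ≠ x̄, with f_i(x) − ⟨u_i, x⟩ ≤ f_i(x̄) − ⟨u_i, x̄⟩ for all i). -/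
/-!
If `x ≠ xb` satisfied `f i x - u i x ≤ f i xb - u i xb` for all `i`, pick a continuous functional
`g` with `g x > g xb` (Hahn–Banach). Since each `U i` is weak*-open, `u i + t • g` stays in `U i`
for some small `t > 0`, and this tilted scenario makes all the inequalities at `x` strict,
contradicting weak efficiency of `xb`.
-/

open Filter Topology

theorem IsOpen.eventually_add_smul_mem {𝕜 E : Type*} [Semiring 𝕜] [TopologicalSpace 𝕜]
    [TopologicalSpace E] [AddCommMonoid E] [Module 𝕜 E] [ContinuousAdd E] [ContinuousSMul 𝕜 E]
    {U : Set E} (hU : IsOpen U) {u : E} (hu : u ∈ U) (v : E) :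
    ∀ᶠ t in 𝓝 (0 : 𝕜), u + t • v ∈ U := by
  have hcont : Continuous fun t : 𝕜 => u + t • v := by fun_prop
  exact hcont.continuousAt.preimage_mem_nhds (by simpa using hU.mem_nhds hu)

theorem exists_pos_forall_add_smul_mem {ι E : Type*} [Finite ι] [TopologicalSpace E]
    [AddCommMonoid E] [Module ℝ E] [ContinuousAdd E] [ContinuousSMul ℝ E]
    {U : ι → Set E} (hU : ∀ i, IsOpen (U i)) {u : ι → E} (hu : ∀ i, u i ∈ U i) (v : E) :
    ∃ t : ℝ, 0 < t ∧ ∀ i, u i + t • v ∈ U i := by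
  have hnear : ∀ᶠ t in 𝓝 (0 : ℝ), ∀ i, u i + t • v ∈ U i :=
    eventually_all.2 fun i => (hU i).eventually_add_smul_mem (hu i) v
  have hright : ∀ᶠ t in 𝓝[>] (0 : ℝ), 0 < t ∧ ∀ i, u i + t • v ∈ U i :=
    eventually_mem_nhdsWithin.and (hnear.filter_mono nhdsWithin_le_nhds)
  exact hright.exists

theorem highly_robust_weak_iff_strict_of_open_general
    {X : Type*} [NormedAddCommGroup X] [NormedSpace ℝ X]
    {p : ℕ} (Ω : Set X) (f : Fin p → X → ℝ) (U : Fin p → Set (WeakDual ℝ X))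
    (hUopen : ∀ i, IsOpen (U i)) (xb : X)
    (hweak : ∀ u : Fin p → WeakDual ℝ X, (∀ i, u i ∈ U i) →
      ¬ ∃ x ∈ Ω, ∀ i, f i x - u i x < f i xb - u i xb) :
    ∀ u : Fin p → WeakDual ℝ X, (∀ i, u i ∈ U i) →
      ¬ ∃ x ∈ Ω, x ≠ xb ∧ ∀ i, f i x - u i x ≤ f i xb - u i xb := by
  rintro u hu ⟨x, hxΩ, hne, hle⟩
  obtain ⟨g, hg⟩ := SeparatingDual.exists_eq_one (R := ℝ) (sub_ne_zero.2 hne)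
  obtain ⟨t, ht, htU⟩ := exists_pos_forall_add_smul_mem hUopen hu (StrongDual.toWeakDual g)
  refine hweak _ htU ⟨x, hxΩ, fun i => ?_⟩
  have hgx : g x = g xb + 1 := by rw [map_sub] at hg; linarith
  change f i x - (u i x + t * g x) < f i xb - (u i xb + t * g xb)
  rw [hgx]
  linarith [hle i]

/-- If the uncertainty sets `U i ⊆ X*` are weak*-open, then any highly
robust weakly efficient solution is a highly robust strictly efficient solution. -/
theorem highly_robust_weak_iff_strict_of_open
    {X : Type*} [NormedAddCommGroup X] [NormedSpace ℝ X] [CompleteSpace X]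
    {p : ℕ} (Ω : Set X) (f : Fin p → X → ℝ) (U : Fin p → Set (WeakDual ℝ X))
    (hUopen : ∀ i, IsOpen (U i)) (xb : X) (hxb : xb ∈ Ω)
    (hweak : ∀ u : Fin p → WeakDual ℝ X, (∀ i, u i ∈ U i) →
      ¬ ∃ x ∈ Ω, ∀ i, f i x - u i x < f i xb - u i xb) :
    ∀ u : Fin p → WeakDual ℝ X, (∀ i, u i ∈ U i) →
      ¬ ∃ x ∈ Ω, x ≠ xb ∧ ∀ i, f i x - u i x ≤ f i xb - u i xb :=
  highly_robust_weak_iff_strict_of_open_general Ω f U hUopen xb hweak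
end

section
/- Let Ū = U_1 = … = U_p ⊆ X* and let f_i : X → ℝ, Ω ⊆ X. A point x̄ ∈ Ω is a highly robust efficient solution of the family of problems min (f_1(x)−⟨u_1,x⟩, …, f_p(x)−⟨u_p,x⟩) over x ∈ Ω, indexed by (u_1,…,u_p) ∈ Ū^p, if and only if x̄ is a highly robust efficient solution of the family min (f_1(x)−⟨u,x⟩, …, f_p(x)−⟨u,x⟩) over x ∈ Ω, indexed by u ∈ Ū (the same perturbation in every objective). -/
/-- When all uncertainty sets coincide (`Ū = U_1 = … = U_p`), highly
robust efficiency for independent perturbations `u ∈ Ū^p` is equivalent to highly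
robust efficiency for a common perturbation `u ∈ Ū` in every objective. -/
theorem highly_robust_common_perturbation
    {X : Type*} [NormedAddCommGroup X] [NormedSpace ℝ X] [CompleteSpace X]
    {p : ℕ} (hp : 2 ≤ p) (Ω : Set X) (f : Fin p → X → ℝ)
    (Ub : Set (X →L[ℝ] ℝ)) (xb : X) (hxb : xb ∈ Ω) :
    (∀ u : Fin p → (X →L[ℝ] ℝ), (∀ i, u i ∈ Ub) →
        ¬ ∃ x ∈ Ω, (∀ i, f i x - u i x ≤ f i xb - u i xb) ∧
          (∃ i, f i x - u i x < f i xb - u i xb)) ↔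
    (∀ u ∈ Ub,
        ¬ ∃ x ∈ Ω, (∀ i, f i x - u x ≤ f i xb - u xb) ∧
          (∃ i, f i x - u x < f i xb - u xb)) := by
  constructor
  · intro h u hu
    exact h (fun _ => u) (fun _ => hu)
  · intro h u hu
    rintro ⟨x, hx, hle, i0, hlt⟩
    have hne : (Finset.univ : Finset (Fin p)).Nonempty := ⟨i0, Finset.mem_univ _⟩
    obtain ⟨j, -, hj⟩ := Finset.exists_max_image Finset.univ (fun i => u i (x - xb)) hne
    apply h (u j) (hu j)
    refine ⟨x, hx, fun i => ?_, ⟨i0, ?_⟩⟩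
    · have h1 := hle i
      have h2 := hj i (Finset.mem_univ i)
      simp only [map_sub] at h2
      linarith
    · have h2 := hj i0 (Finset.mem_univ i0)
      simp only [map_sub] at h2
      linarith
end

section
/- Let X be a Banach space, Ω ⊆ X, f_i : X → ℝ, and U = ∏_{i=1}^p U_i with U_i ⊆ X*. Suppose x̄ ∈ Ω is a highly robust weakly efficient solution of (P_U), and suppose that for every x ∈ Ω \ {x̄} there exists u ∈ U with ⟨u_i, x − x̄⟩ > 0 for all i ∈ {1,…,p}. Then x̄ is a strictly efficient solution of the nominal problem min f(x) over Ω, i.e., there is no x ∈ Ω \ {x̄} with f_i(x) ≤ f_i(x̄) for all i. -/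
/-- If `x̄` is highly robust weakly efficient and for every
`x ∈ Ω \ {x̄}` there is `u ∈ U` with `⟨u_i, x − x̄⟩ > 0` for all `i`, then `x̄` is
strictly efficient for the nominal problem. -/
theorem strictly_efficient_of_highly_robust_weak
    {X : Type*} [NormedAddCommGroup X] [NormedSpace ℝ X] [CompleteSpace X]
    {p : ℕ} (Ω : Set X) (f : Fin p → X → ℝ) (U : Fin p → Set (X →L[ℝ] ℝ))
    (xb : X) (hxb : xb ∈ Ω)
    (hweak : ∀ u : Fin p → (X →L[ℝ] ℝ), (∀ i, u i ∈ U i) →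
      ¬ ∃ x ∈ Ω, ∀ i, f i x - u i x < f i xb - u i xb)
    (hcond : ∀ x ∈ Ω, x ≠ xb → ∃ u : Fin p → (X →L[ℝ] ℝ),
      (∀ i, u i ∈ U i) ∧ ∀ i, 0 < u i (x - xb)) :
    ¬ ∃ x ∈ Ω, x ≠ xb ∧ ∀ i, f i x ≤ f i xb := by
  rintro ⟨x, hxΩ, hxne, hle⟩
  obtain ⟨u, huU, hupos⟩ := hcond x hxΩ hxne
  refine hweak u huU ⟨x, hxΩ, fun i => ?_⟩
  have := hupos i
  rw [map_sub] at this
  linarith [hle i]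
end

section
/- Let X be a Banach space with dual X*, Ω ⊆ X, f_i : X → ℝ, and let the uncertainty sets U_i ⊆ X* be weak*-compact. If x̄ ∈ Ω is a highly robust efficient solution of (P_U), then x̄ is a worst-case robust efficient solution, i.e., x̄ is an efficient solution of min (F_1(x), …, F_p(x)) over Ω, where F_i(x) := sup_{u_i ∈ U_i} ( f_i(x) − ⟨u_i, x⟩ ). -/
/-- With weak*-compact (nonempty) uncertainty sets, every highly robust
efficient solution is a worst-case robust efficient solution, where
`F_i(x) = sup_{u_i ∈ U_i} (f_i(x) − ⟨u_i, x⟩)`. -/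
theorem worst_case_robust_of_highly_robust
    {X : Type*} [NormedAddCommGroup X] [NormedSpace ℝ X] [CompleteSpace X]
    {p : ℕ} (Ω : Set X) (f : Fin p → X → ℝ) (U : Fin p → Set (WeakDual ℝ X))
    (hUne : ∀ i, (U i).Nonempty) (hUcpt : ∀ i, IsCompact (U i))
    (F : Fin p → X → ℝ)
    (hF : ∀ i x, F i x = sSup ((fun u : WeakDual ℝ X => f i x - u x) '' U i))
    (xb : X) (hxb : xb ∈ Ω)
    (hrob : ∀ u : Fin p → WeakDual ℝ X, (∀ i, u i ∈ U i) →
      ¬ ∃ x ∈ Ω, (∀ i, f i x - u i x ≤ f i xb - u i xb) ∧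
        (∃ i, f i x - u i x < f i xb - u i xb)) :
    ¬ ∃ x ∈ Ω, (∀ i, F i x ≤ F i xb) ∧ (∃ i, F i x < F i xb) := by
  rintro ⟨x, hxΩ, hle, i0, hlt⟩
  have hcont : Continuous fun u : WeakDual ℝ X => u xb :=
    WeakBilin.eval_continuous _ xb
  -- choose minimizers of u ↦ u xb on each U i
  have hmin : ∀ i, ∃ u ∈ U i, ∀ v ∈ U i, u xb ≤ v xb := fun i => by
    obtain ⟨u, hu, hmin⟩ :=
      (hUcpt i).exists_isMinOn (hUne i) (hcont.continuousOn)
    exact ⟨u, hu, fun v hv => hmin hv⟩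
  choose u hu humin using hmin
  -- bounds
  have hFxb : ∀ i, F i xb = f i xb - u i xb := by
    intro i
    rw [hF]
    apply le_antisymm
    · apply csSup_le ((hUne i).image _)
      rintro y ⟨v, hv, rfl⟩
      exact sub_le_sub_left (humin i v hv) _
    · exact le_csSup (((hUcpt i).image
        (by continuity)).bddAbove) ⟨u i, hu i, rfl⟩
  have hFx : ∀ i, f i x - u i x ≤ F i x := by
    intro i
    rw [hF]
    exact le_csSup (((hUcpt i).image
      ((continuous_const.sub (WeakBilin.eval_continuous _ x)))).bddAbove) ⟨u i, hu i, rfl⟩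
  exact hrob u hu ⟨x, hxΩ,
    fun i => (hFx i).trans ((hle i).trans_eq (hFxb i)),
    ⟨i0, (hFx i0).trans_lt (hlt.trans_eq (hFxb i0))⟩⟩
end

section
/- Let X be a Banach space, Ω ⊆ X, f_i : X → ℝ, and let the uncertainty sets U_i ⊆ X* be weak*-compact. If x̄ ∈ Ω is a highly robust efficient solution of (P_U), then x̄ is a set-based robust efficient solution: there is no x ∈ Ω with f_U(x) ⊆ f_U(x̄) − ℝ^p_≥, where f_U(x) = { (f_1(x)−⟨u_1,x⟩, …, f_p(x)−⟨u_p,x⟩) : u ∈ U } and ℝ^p_≥ = { y ∈ ℝ^p : y ≥ 0 componentwise, y ≠ 0 }. -/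
/-- With weak*-compact uncertainty sets, every highly robust efficient
solution is a set-based robust efficient solution: there is no `x ∈ Ω` with
`f_U(x) ⊆ f_U(x̄) − ℝ^p_≥`. -/
theorem set_based_robust_of_highly_robust
    {X : Type*} [NormedAddCommGroup X] [NormedSpace ℝ X] [CompleteSpace X]
    {p : ℕ} (Ω : Set X) (f : Fin p → X → ℝ) (U : Fin p → Set (WeakDual ℝ X))
    (hUne : ∀ i, (U i).Nonempty) (hUcpt : ∀ i, IsCompact (U i))
    (fU : X → Set (Fin p → ℝ))
    (hfU : ∀ x, fU x = {y | ∃ u : Fin p → WeakDual ℝ X,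
      (∀ i, u i ∈ U i) ∧ y = fun i => f i x - u i x})
    (xb : X) (hxb : xb ∈ Ω)
    (hrob : ∀ u : Fin p → WeakDual ℝ X, (∀ i, u i ∈ U i) →
      ¬ ∃ x ∈ Ω, (∀ i, f i x - u i x ≤ f i xb - u i xb) ∧
        (∃ i, f i x - u i x < f i xb - u i xb)) :
    ¬ ∃ x ∈ Ω, fU x ⊆ {y | ∃ z ∈ fU xb, (∀ i, y i ≤ z i) ∧ y ≠ z} := by
  rintro ⟨x, hxΩ, hsub⟩
  have hmin : ∀ i, ∃ u ∈ U i, ∀ v ∈ U i, u xb ≤ v xb := by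
    intro i
    obtain ⟨u, hu, hm⟩ := (hUcpt i).exists_isMinOn (hUne i)
      ((WeakDual.eval_continuous xb).continuousOn)
    exact ⟨u, hu, fun v hv => hm hv⟩
  choose ub hubU hubmin using hmin
  have hy : (fun i => f i x - ub i x) ∈ fU x := by
    rw [hfU]; exact ⟨ub, hubU, rfl⟩
  obtain ⟨z, hz, hle, hne⟩ := hsub hy
  rw [hfU] at hz
  obtain ⟨u', hu', rfl⟩ := hz
  refine hrob ub hubU ⟨x, hxΩ, ?_, ?_⟩
  · intro i
    have h1 := hle i
    have h2 := hubmin i (u' i) (hu' i)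
    simp only at h1
    linarith
  · have : ∃ i, (f i x - ub i x) ≠ (f i xb - u' i xb) := by
      by_contra h
      push_neg at h
      exact hne (funext h)
    obtain ⟨i, hi⟩ := this
    refine ⟨i, ?_⟩
    have h1 := hle i
    simp only at h1
    have h1' := lt_of_le_of_ne h1 hi
    have h2 := hubmin i (u' i) (hu' i)
    linarith
end

section
/- Let X be a normed space, Ω ⊆ X, f_i : X → ℝ for i ∈ I = {1,…,p}, and suppose there is L > 0 with ‖u_i‖ < L for all u_i ∈ U_i and all i. If x̄ ∈ Ω is an isolated efficient solution of the nominal problem with constant L, i.e., max_{i∈I} (f_i(x) − f_i(x̄)) ≥ L‖x − x̄‖ for all x ∈ Ω, then x̄ is a highly robust strictly efficient solution of (P_U): for every u ∈ U = ∏ U_i there is no x ∈ Ω \ {x̄} with f_i(x) − ⟨u_i, x⟩ ≤ f_i(x̄) − ⟨u_i, x̄⟩ for all i. -/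
/-- If `‖u_i‖ < L` for all `u_i ∈ U_i` and `x̄` is an isolated
efficient solution of the nominal problem with constant `L`, then `x̄` is a highly
robust strictly efficient solution of `(P_U)`. -/
theorem highly_robust_strict_of_isolated
    {X : Type*} [NormedAddCommGroup X] [NormedSpace ℝ X]
    {p : ℕ} (Ω : Set X) (f : Fin p → X → ℝ) (U : Fin p → Set (X →L[ℝ] ℝ))
    (L : ℝ) (hL : 0 < L) (hU : ∀ i, ∀ u ∈ U i, ‖u‖ < L)
    (xb : X) (hxb : xb ∈ Ω)
    (hiso : ∀ x ∈ Ω, ∃ i, L * ‖x - xb‖ ≤ f i x - f i xb) :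
    ∀ u : Fin p → (X →L[ℝ] ℝ), (∀ i, u i ∈ U i) →
      ¬ ∃ x ∈ Ω, x ≠ xb ∧ ∀ i, f i x - u i x ≤ f i xb - u i xb := by
  intro u hu ⟨x, hxΩ, hxne, hle⟩
  obtain ⟨i, hi⟩ := hiso x hxΩ
  have hnorm : 0 < ‖x - xb‖ := by
    simpa [sub_eq_zero] using hxne
  have h1 : f i x - f i xb ≤ u i (x - xb) := by
    have := hle i
    simp only [map_sub]
    linarith
  have h2 : u i (x - xb) ≤ ‖u i‖ * ‖x - xb‖ := le_trans (le_abs_self _) ((u i).le_opNorm _)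
  have h3 : ‖u i‖ * ‖x - xb‖ < L * ‖x - xb‖ :=
    mul_lt_mul_of_pos_right (hU i _ (hu i)) hnorm
  linarith
end

section
/- Let X be a Banach space, Ω ⊆ X, f_i : X → ℝ, and suppose x̄ ∈ Ω is a highly robust weakly efficient solution of (P_U). Suppose there exists L > 0 such that for every x ∈ Ω and every i ∈ I, the set A_L(x) := { x* ∈ X* : ⟨x*, x − x̄⟩ = L‖x − x̄‖ } intersects U_i. Then x̄ is an isolated efficient solution of the nominal problem with constant L: max_{i∈I} (f_i(x) − f_i(x̄)) ≥ L‖x − x̄‖ for all x ∈ Ω. -/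
/-- If `x̄` is highly robust weakly efficient and for every `x ∈ Ω`
and every `i` the set `A_L(x) = {x* : ⟨x*, x − x̄⟩ = L‖x − x̄‖}` intersects `U_i`,
then `x̄` is an isolated efficient solution of the nominal problem with constant `L`. -/
theorem isolated_of_highly_robust_weak
    {X : Type*} [NormedAddCommGroup X] [NormedSpace ℝ X] [CompleteSpace X]
    {p : ℕ} (Ω : Set X) (f : Fin p → X → ℝ) (U : Fin p → Set (X →L[ℝ] ℝ))
    (xb : X) (hxb : xb ∈ Ω)
    (hweak : ∀ u : Fin p → (X →L[ℝ] ℝ), (∀ i, u i ∈ U i) →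
      ¬ ∃ x ∈ Ω, ∀ i, f i x - u i x < f i xb - u i xb)
    (L : ℝ) (hL : 0 < L)
    (hA : ∀ x ∈ Ω, ∀ i : Fin p,
      ∃ xst ∈ U i, (xst : X →L[ℝ] ℝ) (x - xb) = L * ‖x - xb‖) :
    ∀ x ∈ Ω, ∃ i, L * ‖x - xb‖ ≤ f i x - f i xb := by
  intro x hx
  choose u hu hval using hA x hx
  have := hweak u hu
  push_neg at this
  obtain ⟨i, hi⟩ := this x hx
  refine ⟨i, ?_⟩
  have h2 : (u i) (x - xb) = u i x - u i xb := by simp [map_sub]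
  rw [← hval i, h2]
  linarith
end

section
/- Let X = ℝ^n, Ω ⊆ ℝ^n, and f_i : ℝ^n → ℝ locally Lipschitz at x̄ ∈ Ω. If x̄ is a local highly robust weakly efficient solution of (P_U), then there exist no d in the (weak) contingent cone T(x̄; Ω) and no u ∈ U such that ⟨x* − u_i, d⟩ < 0 for all x* ∈ ∂f_i(x̄) and all i ∈ I, where ∂f_i denotes the Mordukhovich (limiting) subdifferential. -/
open Filter Topology

/-- Fréchet subdifferential of `f : ℝⁿ → ℝ` at `x`. -/
def frechetSubdiff {n : ℕ} (f : EuclideanSpace ℝ (Fin n) → ℝ)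
    (x : EuclideanSpace ℝ (Fin n)) : Set (EuclideanSpace ℝ (Fin n)) :=
  {v | ∀ ε > (0 : ℝ), ∀ᶠ y in 𝓝 x,
    -ε * ‖y - x‖ ≤ f y - f x - (inner ℝ v (y - x) : ℝ)}

/-- Mordukhovich (limiting) subdifferential of `f : ℝⁿ → ℝ` at `x`. -/
def limitingSubdiff {n : ℕ} (f : EuclideanSpace ℝ (Fin n) → ℝ)
    (x : EuclideanSpace ℝ (Fin n)) : Set (EuclideanSpace ℝ (Fin n)) :=
  {v | ∃ xs vs : ℕ → EuclideanSpace ℝ (Fin n),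
    (∀ k, vs k ∈ frechetSubdiff f (xs k)) ∧
    Tendsto xs atTop (𝓝 x) ∧ Tendsto vs atTop (𝓝 v)}

/-- Contingent cone to `Ω` at `x`. -/
def contingentCone {n : ℕ} (x : EuclideanSpace ℝ (Fin n))
    (Ω : Set (EuclideanSpace ℝ (Fin n))) : Set (EuclideanSpace ℝ (Fin n)) :=
  {d | ∃ (xs : ℕ → EuclideanSpace ℝ (Fin n)) (ts : ℕ → ℝ),
    (∀ k, xs k ∈ Ω) ∧ (∀ k, 0 < ts k) ∧ Tendsto ts atTop (𝓝 0) ∧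
    Tendsto (fun k => (ts k)⁻¹ • (xs k - x)) atTop (𝓝 d)}

/-!
If some `d ∈ T(x̄; Ω)` and `u ∈ U` had `⟨x* - uᵢ, d⟩ < 0` for all limiting subgradients, then along
a sequence `xₖ ∈ Ω` with `(xₖ - x̄) / tₖ → d` every `fᵢ - ⟨uᵢ, ·⟩` would eventually lie strictly
below its value at `x̄`, contradicting robustness. Indeed, if `fᵢ(xₖ) - fᵢ(x̄) ≥ ⟨uᵢ, xₖ - x̄⟩`
infinitely often, an approximate mean value inequality gives Fréchet subgradients `vₖ` at points
`zₖ → x̄` with `fᵢ(xₖ) - fᵢ(x̄) - tₖ² ≤ ⟨vₖ, xₖ - x̄⟩`. They are bounded by the Lipschitz constant,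
so a subsequence converges to some `v ∈ ∂fᵢ(x̄)`, and dividing by `tₖ` gives `⟨uᵢ, d⟩ ≤ ⟨v, d⟩`.

The mean value inequality on `[c, b]` comes from minimizing
`Φ (y, t) = f y + λ ‖y - (c + t • (b - c))‖² - t a` over a ball times `[0, 1]`, with
`a = f b - f c - η`: at the minimizer the gradient of the penalty in `y` is a Fréchet subgradient,
and minimality in `t` bounds its slope along `b - c` from below by `a`.
-/

open Set Metric

section

variable {n : ℕ}

local notation "E" => EuclideanSpace ℝ (Fin n)

theorem mem_frechetSubdiff_of_isLocalMin_add_sq {f : E → ℝ} {z P : E} {lam : ℝ}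
    (h : IsLocalMin (fun y => f y + lam * ‖y - P‖ ^ 2) z) :
    (2 * lam) • (P - z) ∈ frechetSubdiff f z := by
  intro ε hε
  have hsmall : ∀ᶠ y in 𝓝 z, |lam| * ‖y - z‖ < ε := by
    have hcont : Continuous fun y : E => |lam| * ‖y - z‖ := by fun_prop
    have := hcont.tendsto z
    rw [sub_self, norm_zero, mul_zero] at this
    exact this.eventually (gt_mem_nhds hε)
  filter_upwards [h, hsmall] with y hmin hy
  have hsq : ‖y - P‖ ^ 2 = ‖y - z‖ ^ 2 + 2 * inner ℝ (y - z) (z - P) + ‖z - P‖ ^ 2 := by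
    rw [← norm_add_sq_real, sub_add_sub_cancel]
  have hinner : inner ℝ ((2 * lam) • (P - z)) (y - z) = -(2 * lam) * inner ℝ (y - z) (z - P) := by
    rw [real_inner_smul_left, real_inner_comm, ← neg_sub z P, inner_neg_right]
    ring
  have hquad : lam * ‖y - z‖ ^ 2 ≤ ε * ‖y - z‖ := by
    nlinarith [le_abs_self lam, norm_nonneg (y - z)]
  rw [hsq] at hmin
  rw [hinner]
  nlinarith

theorem norm_le_of_mem_frechetSubdiff {f : E → ℝ} {K : NNReal} {s : Set E} {z v : E}
    (hf : LipschitzOnWith K f s) (hs : s ∈ 𝓝 z) (hv : v ∈ frechetSubdiff f z) : ‖v‖ ≤ K := by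
  refine le_of_forall_pos_le_add fun ε hε => ?_
  have hray : Tendsto (fun t : ℝ => z + t • v) (𝓝[>] 0) (𝓝 z) := by
    have hcont : Continuous fun t : ℝ => z + t • v := by fun_prop
    have := hcont.tendsto 0
    rw [zero_smul, add_zero] at this
    exact this.mono_left nhdsWithin_le_nhds
  obtain ⟨t, ⟨hts, hfre⟩, ht : 0 < t⟩ :=
    ((hray.eventually (Filter.inter_mem hs (hv ε hε))).and self_mem_nhdsWithin).exists
  have hlip : f (z + t • v) - f z ≤ K * (t * ‖v‖) := by
    have := hf.dist_le_mul _ hts z (mem_of_mem_nhds hs)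
    rw [Real.dist_eq, dist_eq_norm, add_sub_cancel_left, norm_smul, Real.norm_of_nonneg ht.le]
      at this
    exact (le_abs_self _).trans this
  replace hfre : -ε * (t * ‖v‖) ≤ f (z + t • v) - f z - t * ‖v‖ ^ 2 := by
    simpa only [Set.mem_ofPred_eq, add_sub_cancel_left, norm_smul, Real.norm_of_nonneg ht.le,
      real_inner_smul_right, real_inner_self_eq_norm_sq] using hfre
  by_contra! hlt
  have hpos : 0 < t * ‖v‖ := mul_pos ht (by linarith [K.coe_nonneg])
  nlinarith

theorem nonneg_of_forall_mem_Ioo_mul_add_mul_sq_nonneg {α β r : ℝ} (hr : 0 < r)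
    (h : ∀ s ∈ Ioo 0 r, 0 ≤ α * s + β * s ^ 2) : 0 ≤ α := by
  have hlim : Tendsto (fun s : ℝ => α + β * s) (𝓝[>] 0) (𝓝 α) := by
    have hcont : Continuous fun s : ℝ => α + β * s := by fun_prop
    simpa using (hcont.tendsto 0).mono_left nhdsWithin_le_nhds
  refine ge_of_tendsto hlim ?_
  filter_upwards [Ioo_mem_nhdsGT hr] with s hs
  refine nonneg_of_mul_nonneg_right ?_ hs.1
  nlinarith [h s hs]

theorem le_inner_of_forall_le_on_segment {z c D : E} {a lam τ : ℝ} (hτ : τ ∈ Ico (0 : ℝ) 1)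
    (hmin : ∀ t ∈ Icc (0 : ℝ) 1,
      lam * ‖z - (c + τ • D)‖ ^ 2 - τ * a ≤ lam * ‖z - (c + t • D)‖ ^ 2 - t * a) :
    a ≤ inner ℝ ((2 * lam) • (c + τ • D - z)) D := by
  set P := c + τ • D
  have hexpand : ∀ s : ℝ, ‖z - (c + (τ + s) • D)‖ ^ 2
      = ‖z - P‖ ^ 2 - 2 * s * inner ℝ (z - P) D + s ^ 2 * ‖D‖ ^ 2 := by
    intro s
    rw [add_smul, ← add_assoc, ← sub_sub, norm_sub_sq_real, real_inner_smul_right, norm_smul,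
      mul_pow, Real.norm_eq_abs, sq_abs]
    ring
  have hvD : inner ℝ ((2 * lam) • (P - z)) D = -(2 * lam) * inner ℝ (z - P) D := by
    rw [real_inner_smul_left, ← neg_sub z P, inner_neg_left]
    ring
  rw [hvD, ← sub_nonneg]
  refine nonneg_of_forall_mem_Ioo_mul_add_mul_sq_nonneg (β := lam * ‖D‖ ^ 2) (sub_pos.2 hτ.2)
    fun s hs => ?_
  have := hmin (τ + s) ⟨by linarith [hτ.1, hs.1], by linarith [hs.2]⟩
  rw [hexpand] at this
  nlinarith

theorem mem_frechetSubdiff_and_le_inner_of_isMinOn {f : E → ℝ} {c D z : E} {s : Set E}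
    {a lam τ : ℝ} (hs : s ∈ 𝓝 z) (hτ : τ ∈ Ico (0 : ℝ) 1)
    (hmin : IsMinOn (fun p : E × ℝ => f p.1 + (lam * ‖p.1 - (c + p.2 • D)‖ ^ 2 - p.2 * a))
      (s ×ˢ Icc 0 1) (z, τ)) :
    (2 * lam) • (c + τ • D - z) ∈ frechetSubdiff f z ∧
      a ≤ inner ℝ ((2 * lam) • (c + τ • D - z)) D := by
  refine ⟨mem_frechetSubdiff_of_isLocalMin_add_sq (Filter.mem_of_superset hs fun y hy => ?_),
    le_inner_of_forall_le_on_segment hτ fun t ht => ?_⟩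
  · have := isMinOn_iff.1 hmin _ (mk_mem_prod hy (Ico_subset_Icc_self hτ))
    simp only [Set.mem_ofPred_eq] at this ⊢
    linarith
  · have := isMinOn_iff.1 hmin _ (mk_mem_prod (mem_of_mem_nhds hs) ht)
    dsimp only at this
    linarith

theorem norm_sub_lt_of_add_sq_le {f : E → ℝ} {K : NNReal} {c z P : E} {ρ a lam θ τ : ℝ}
    (hf : LipschitzOnWith K f (closedBall c ρ)) (hz : z ∈ closedBall c ρ) (hτ : τ ∈ Icc (0 : ℝ) 1)
    (hθ : 0 ≤ θ) (hlam : K * ρ + |a| < lam * θ ^ 2)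
    (h : f z + (lam * ‖z - P‖ ^ 2 - τ * a) ≤ f c) : ‖z - P‖ < θ := by
  have hρ : 0 ≤ ρ := dist_nonneg.trans (mem_closedBall.1 hz)
  have hfc : f c - f z ≤ K * ρ := by
    have := hf.dist_le_mul c (mem_closedBall_self hρ) z hz
    rw [Real.dist_eq, dist_comm] at this
    exact (le_abs_self _).trans (this.trans (by gcongr; exact mem_closedBall.1 hz))
  have hτa : τ * a ≤ |a| := by
    nlinarith [le_abs_self a, abs_nonneg a, hτ.1, hτ.2]
  have hlam0 : 0 ≤ lam := by
    by_contra! h0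
    nlinarith [abs_nonneg a, mul_nonneg K.coe_nonneg hρ, sq_nonneg θ]
  exact lt_of_pow_lt_pow_left₀ 2 hθ (lt_of_mul_lt_mul_left (by linarith) hlam0)

theorem exists_mem_frechetSubdiff_approx_mean_value {f : E → ℝ} {K : NNReal} {c b : E}
    {ρ η σ : ℝ} (hf : LipschitzOnWith K f (closedBall c ρ)) (hb : ‖b - c‖ < ρ / 2)
    (hη : 0 < η) (hσ : 0 < σ) :
    ∃ z v, v ∈ frechetSubdiff f z ∧ ‖v‖ ≤ K ∧ ‖z - c‖ ≤ ‖b - c‖ + σ ∧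
      f b - f c - η ≤ inner ℝ v (b - c) := by
  have hρ : 0 < ρ := by linarith [norm_nonneg (b - c)]
  have hcρ : c ∈ closedBall c ρ := mem_closedBall_self hρ.le
  set D := b - c
  set a := f b - f c - η
  set θ := min σ (min (ρ / 2) (η / (K + 1)))
  have hθ : 0 < θ := lt_min hσ (lt_min (by positivity) (by positivity))
  have hθρ : θ ≤ ρ / 2 := (min_le_right _ _).trans (min_le_left _ _)
  have hθη : θ ≤ η / (K + 1) := (min_le_right _ _).trans (min_le_right _ _)
  set lam := (K * ρ + |a| + 1) / θ ^ 2
  have hlam : K * ρ + |a| < lam * θ ^ 2 := by rw [div_mul_cancel₀ _ (by positivity)]; linarith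
  set Φ : E × ℝ → ℝ := fun p => f p.1 + (lam * ‖p.1 - (c + p.2 • D)‖ ^ 2 - p.2 * a)
  have hΦ : ContinuousOn Φ (closedBall c ρ ×ˢ Icc 0 1) :=
    (hf.continuousOn.comp continuousOn_fst fun p hp => hp.1).add (by fun_prop)
  obtain ⟨⟨z, τ⟩, ⟨hz : z ∈ closedBall c ρ, hτ : τ ∈ Icc (0 : ℝ) 1⟩, hmin⟩ :=
    ((isCompact_closedBall c ρ).prod isCompact_Icc).exists_isMinOn
      ⟨(c, 0), hcρ, left_mem_Icc.2 zero_le_one⟩ hΦ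
  have hΦc : f z + (lam * ‖z - (c + τ • D)‖ ^ 2 - τ * a) ≤ f c := by
    simpa [Φ] using hmin (mk_mem_prod hcρ (left_mem_Icc.2 zero_le_one))
  have hzP : ‖z - (c + τ • D)‖ < θ := norm_sub_lt_of_add_sq_le hf hz hτ hθ.le hlam hΦc
  -- If `τ = 1` then `z` is `θ`-close to `b`, and `Φ (z, 1) ≥ f c + η - K ‖z - b‖ > Φ (c, 0)`.
  have hτ1 : τ < 1 := by
    refine hτ.2.lt_of_ne fun h1 => ?_
    rw [h1, one_smul, show c + D = b from add_sub_cancel c b] at hzP hΦc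
    have hfb : f b - f z ≤ K * ‖z - b‖ := by
      have := hf.dist_le_mul b (by rw [mem_closedBall, dist_eq_norm]; linarith) z hz
      rw [Real.dist_eq, dist_comm, dist_eq_norm] at this
      exact (le_abs_self _).trans this
    have hKη : K * ‖z - b‖ < η := calc
      K * ‖z - b‖ ≤ K * (η / (K + 1)) := by gcongr; linarith
      _ < η := by rw [mul_div_assoc', div_lt_iff₀ (by positivity)]; linarith
    have hpen : 0 ≤ lam * ‖z - b‖ ^ 2 := by positivity
    linarith [show a = f b - f c - η from rfl]
  have hzc : ‖z - c‖ < ‖D‖ + θ := calc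
    ‖z - c‖ ≤ ‖z - (c + τ • D)‖ + ‖τ • D‖ := by
      rw [← sub_sub]; exact norm_le_norm_sub_add _ _
    _ < ‖D‖ + θ := by
      rw [norm_smul, Real.norm_of_nonneg hτ.1]
      nlinarith [mul_le_of_le_one_left (norm_nonneg D) hτ.2]
  have hs : closedBall c ρ ∈ 𝓝 z :=
    closedBall_mem_nhds_of_mem (by rw [mem_ball, dist_eq_norm]; linarith)
  obtain ⟨hv, hvD⟩ := mem_frechetSubdiff_and_le_inner_of_isMinOn hs ⟨hτ.1, hτ1⟩ hmin
  exact ⟨z, _, hv, norm_le_of_mem_frechetSubdiff hf hs hv,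
    by linarith [min_le_left σ (min (ρ / 2) (η / (K + 1)))], hvD⟩

theorem exists_mem_limitingSubdiff_of_tendsto {f : E → ℝ} {c : E} {zs vs : ℕ → E} {C : ℝ}
    (hvs : ∀ k, vs k ∈ frechetSubdiff f (zs k)) (hzs : Tendsto zs atTop (𝓝 c))
    (hC : ∀ k, ‖vs k‖ ≤ C) :
    ∃ v ∈ limitingSubdiff f c, ∃ ψ : ℕ → ℕ, StrictMono ψ ∧ Tendsto (vs ∘ ψ) atTop (𝓝 v) := by
  obtain ⟨v, -, ψ, hψ, hv⟩ := (isCompact_closedBall (0 : E) C).tendsto_subseq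
    (x := vs) fun k => mem_closedBall_zero_iff.2 (hC k)
  exact ⟨v, ⟨zs ∘ ψ, vs ∘ ψ, fun k => hvs (ψ k), hzs.comp hψ.tendsto_atTop, hv⟩, ψ, hψ, hv⟩

theorem tendsto_of_tendsto_inv_smul_sub {ι F : Type*} [NormedAddCommGroup F] [NormedSpace ℝ F]
    {l : Filter ι} {xs : ι → F} {ts : ι → ℝ} {c d : F} (hts : ∀ k, ts k ≠ 0)
    (hts0 : Tendsto ts l (𝓝 0)) (hd : Tendsto (fun k => (ts k)⁻¹ • (xs k - c)) l (𝓝 d)) :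
    Tendsto xs l (𝓝 c) := by
  have := hts0.smul hd
  simp only [smul_inv_smul₀ (hts _), zero_smul] at this
  exact tendsto_sub_nhds_zero_iff.1 this

theorem exists_mem_limitingSubdiff_inner_le_of_frequently {f : E → ℝ} {K : NNReal} {c d u : E}
    {r : ℝ} {xs : ℕ → E} {ts : ℕ → ℝ} (hr : 0 < r) (hf : LipschitzOnWith K f (ball c r))
    (hts : ∀ k, 0 < ts k) (hts0 : Tendsto ts atTop (𝓝 0))
    (hd : Tendsto (fun k => (ts k)⁻¹ • (xs k - c)) atTop (𝓝 d))
    (hfreq : ∃ᶠ k in atTop, inner ℝ u (xs k - c) ≤ f (xs k) - f c) :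
    ∃ v ∈ limitingSubdiff f c, inner ℝ u d ≤ inner ℝ v d := by
  have hxs := tendsto_of_tendsto_inv_smul_sub (fun k => (hts k).ne') hts0 hd
  have hnear : ∀ᶠ k in atTop, ‖xs k - c‖ < r / 4 := by
    simpa only [mem_ball, dist_eq_norm] using hxs.eventually_mem (ball_mem_nhds c (by positivity))
  obtain ⟨φ, hφ, hgood⟩ := extraction_of_frequently_atTop (hfreq.and_eventually hnear)
  have hmvt (k : ℕ) := exists_mem_frechetSubdiff_approx_mean_value (b := xs (φ k))
    (hf.mono (closedBall_subset_ball (half_lt_self hr))) (by linarith [(hgood k).2])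
    (pow_pos (hts (φ k)) 2) (hts (φ k))
  choose zs vs hvs hK hzs hmv using hmvt
  have hzs_lim : Tendsto zs atTop (𝓝 c) := by
    have hbound : Tendsto (fun k => ‖xs (φ k) - c‖ + ts (φ k)) atTop (𝓝 0) := by
      have := ((tendsto_iff_norm_sub_tendsto_zero.1 hxs).add hts0).comp hφ.tendsto_atTop
      rwa [add_zero] at this
    exact tendsto_iff_norm_sub_tendsto_zero.2 (squeeze_zero (fun _ => norm_nonneg _) hzs hbound)
  obtain ⟨v, hv, ψ, hψ, hvs_lim⟩ := exists_mem_limitingSubdiff_of_tendsto hvs hzs_lim hK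
  have hχ : Tendsto (φ ∘ ψ) atTop atTop := hφ.tendsto_atTop.comp hψ.tendsto_atTop
  have hlower : Tendsto (fun k => inner ℝ u ((ts (φ (ψ k)))⁻¹ • (xs (φ (ψ k)) - c)) - ts (φ (ψ k)))
      atTop (𝓝 (inner ℝ u d)) := by
    simpa using (tendsto_const_nhds.inner (hd.comp hχ)).sub (hts0.comp hχ)
  have hupper : Tendsto (fun k => inner ℝ (vs (ψ k)) ((ts (φ (ψ k)))⁻¹ • (xs (φ (ψ k)) - c)))
      atTop (𝓝 (inner ℝ v d)) :=
    hvs_lim.inner (hd.comp hχ)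
  refine ⟨v, hv, le_of_tendsto_of_tendsto' hlower hupper fun k => ?_⟩
  have ht := hts (φ (ψ k))
  have hle : inner ℝ u (xs (φ (ψ k)) - c)
      ≤ inner ℝ (vs (ψ k)) (xs (φ (ψ k)) - c) + ts (φ (ψ k)) ^ 2 := by
    linarith [(hgood (ψ k)).1, hmv (ψ k)]
  rw [real_inner_smul_right, real_inner_smul_right, sub_le_iff_le_add]
  calc _ ≤ (ts (φ (ψ k)))⁻¹ * (inner ℝ (vs (ψ k)) (xs (φ (ψ k)) - c) + ts (φ (ψ k)) ^ 2) :=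
        mul_le_mul_of_nonneg_left hle (inv_nonneg.2 ht.le)
    _ = _ := by field_simp

theorem eventually_lt_of_inner_limitingSubdiff_sub_neg {f : E → ℝ} {K : NNReal} {c d u : E}
    {r : ℝ} {xs : ℕ → E} {ts : ℕ → ℝ} (hr : 0 < r) (hf : LipschitzOnWith K f (ball c r))
    (hts : ∀ k, 0 < ts k) (hts0 : Tendsto ts atTop (𝓝 0))
    (hd : Tendsto (fun k => (ts k)⁻¹ • (xs k - c)) atTop (𝓝 d))
    (hneg : ∀ v ∈ limitingSubdiff f c, inner ℝ (v - u) d < 0) :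
    ∀ᶠ k in atTop, f (xs k) - inner ℝ u (xs k) < f c - inner ℝ u c := by
  by_contra h
  obtain ⟨v, hv, hle⟩ := exists_mem_limitingSubdiff_inner_le_of_frequently hr hf hts hts0 hd
    ((not_eventually.1 h).mono fun k hk => by rw [inner_sub_right]; linarith [not_lt.1 hk])
  have := hneg v hv
  rw [inner_sub_left] at this
  linarith

end

theorem necessary_condition_limiting_general
    {n p : ℕ} (Ω : Set (EuclideanSpace ℝ (Fin n)))
    (f : Fin p → EuclideanSpace ℝ (Fin n) → ℝ)
    (U : Fin p → Set (EuclideanSpace ℝ (Fin n)))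
    (xb : EuclideanSpace ℝ (Fin n))
    (hf : ∀ i, ∃ K : NNReal, ∃ ε > (0 : ℝ),
      LipschitzOnWith K (f i) (Metric.ball xb ε))
    (hrob : ∃ δ > (0 : ℝ), ∀ u : Fin p → EuclideanSpace ℝ (Fin n),
      (∀ i, u i ∈ U i) →
      ¬ ∃ x ∈ Ω ∩ Metric.ball xb δ,
        ∀ i, f i x - (inner ℝ (u i) x : ℝ) < f i xb - (inner ℝ (u i) xb : ℝ)) :
    ¬ ∃ d ∈ contingentCone xb Ω, ∃ u : Fin p → EuclideanSpace ℝ (Fin n),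
      (∀ i, u i ∈ U i) ∧
      ∀ i, ∀ v ∈ limitingSubdiff (f i) xb, (inner ℝ (v - u i) d : ℝ) < 0 := by
  obtain ⟨δ, hδ, hrob⟩ := hrob
  rintro ⟨d, ⟨xs, ts, hxsΩ, hts, hts0, hd⟩, u, hu, hneg⟩
  have hdescent : ∀ i, ∀ᶠ k in atTop,
      f i (xs k) - inner ℝ (u i) (xs k) < f i xb - inner ℝ (u i) xb := fun i => by
    obtain ⟨K, r, hr, hfi⟩ := hf i
    exact eventually_lt_of_inner_limitingSubdiff_sub_neg hr hfi hts hts0 hd (hneg i)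
  have hnear : ∀ᶠ k in atTop, xs k ∈ ball xb δ :=
    (tendsto_of_tendsto_inv_smul_sub (fun k => (hts k).ne') hts0 hd).eventually_mem
      (ball_mem_nhds xb hδ)
  obtain ⟨k, hk, hkδ⟩ := ((eventually_all.2 hdescent).and hnear).exists
  exact hrob u hu ⟨xs k, ⟨hxsΩ k, hkδ⟩, hk⟩

/-- Necessary condition for a local highly robust weakly efficient
solution in `ℝⁿ` via the Mordukhovich subdifferential. -/
theorem necessary_condition_limiting
    {n p : ℕ} (Ω : Set (EuclideanSpace ℝ (Fin n)))
    (f : Fin p → EuclideanSpace ℝ (Fin n) → ℝ)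
    (U : Fin p → Set (EuclideanSpace ℝ (Fin n)))
    (xb : EuclideanSpace ℝ (Fin n)) (hxb : xb ∈ Ω)
    (hf : ∀ i, ∃ K : NNReal, ∃ ε > (0 : ℝ),
      LipschitzOnWith K (f i) (Metric.ball xb ε))
    (hrob : ∃ δ > (0 : ℝ), ∀ u : Fin p → EuclideanSpace ℝ (Fin n),
      (∀ i, u i ∈ U i) →
      ¬ ∃ x ∈ Ω ∩ Metric.ball xb δ,
        ∀ i, f i x - (inner ℝ (u i) x : ℝ) < f i xb - (inner ℝ (u i) xb : ℝ)) :
    ¬ ∃ d ∈ contingentCone xb Ω, ∃ u : Fin p → EuclideanSpace ℝ (Fin n),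
      (∀ i, u i ∈ U i) ∧
      ∀ i, ∀ v ∈ limitingSubdiff (f i) xb, (inner ℝ (v - u i) d : ℝ) < 0 :=
  necessary_condition_limiting_general Ω f U xb hf hrob
end

section
/- Let X be a Banach space, Ω ⊆ X, x̄ ∈ Ω, and f_i : X → ℝ. Assume there exist no d ∈ X and u ∈ U such that ⟨x* − u_i, d⟩ < 0 for all x* ∈ ∂f_i(x̄) and all i ∈ I. If f is generalized locally convex at x̄ on Ω (i.e., there is a neighborhood B of x̄ such that for each x ∈ Ω ∩ B and each u ∈ U there exists d ∈ X with ⟨x* − u_i, d⟩ ≤ f_i(x,u_i) − f_i(x̄,u_i) for all x* ∈ ∂f_i(x̄) and all i, where f_i(x,u_i) = f_i(x) − ⟨u_i,x⟩), then x̄ is a local highly robust weakly efficient solution of (P_U). -/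
/-- Sufficient condition for local highly robust weak efficiency under
generalized local convexity. Here `Df i` stands for the subdifferential `∂f_i(x̄)`
(the Mordukhovich subdifferential; the statement holds for any subdifferential). -/
theorem sufficient_condition_weak
    {X : Type*} [NormedAddCommGroup X] [NormedSpace ℝ X] [CompleteSpace X]
    {p : ℕ} (Ω : Set X) (f : Fin p → X → ℝ) (U : Fin p → Set (X →L[ℝ] ℝ))
    (Df : Fin p → Set (X →L[ℝ] ℝ)) (xb : X) (hxb : xb ∈ Ω)
    (hno : ¬ ∃ d : X, ∃ u : Fin p → (X →L[ℝ] ℝ), (∀ i, u i ∈ U i) ∧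
      ∀ i, ∀ xst ∈ Df i, (xst : X →L[ℝ] ℝ) d - u i d < 0)
    (hconv : ∃ δ > (0 : ℝ), ∀ x ∈ Ω ∩ Metric.ball xb δ,
      ∀ u : Fin p → (X →L[ℝ] ℝ), (∀ i, u i ∈ U i) → ∃ d : X,
        ∀ i, ∀ xst ∈ Df i, (xst : X →L[ℝ] ℝ) d - u i d ≤
          (f i x - u i x) - (f i xb - u i xb)) :
    ∃ δ > (0 : ℝ), ∀ u : Fin p → (X →L[ℝ] ℝ), (∀ i, u i ∈ U i) →
      ¬ ∃ x ∈ Ω ∩ Metric.ball xb δ, ∀ i, f i x - u i x < f i xb - u i xb := by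
  obtain ⟨δ, hδ, hB⟩ := hconv
  refine ⟨δ, hδ, ?_⟩
  rintro u hu ⟨x, hx, hlt⟩
  obtain ⟨d, hd⟩ := hB x hx u hu
  exact hno ⟨d, u, hu, fun i xst hxst =>
    lt_of_le_of_lt (hd i xst hxst) (by linarith [hlt i])⟩
end

section
/- Let X be a Banach space, Ω ⊆ X, x̄ ∈ Ω, and f_i : X → ℝ. Assume there exist no d ∈ X and u ∈ U with ⟨x* − u_i, d⟩ < 0 for all x* ∈ ∂f_i(x̄), all i. If f is strictly generalized locally convex at x̄ on Ω (for each x ∈ Ω ∩ B \ {x̄} and u ∈ U there is d with ⟨x* − u_i, d⟩ < f_i(x,u_i) − f_i(x̄,u_i) for all x* ∈ ∂f_i(x̄), all i), then x̄ is a local highly robust strictly efficient solution of (P_U). -/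
/-- Sufficient condition for local highly robust strict efficiency under
strict generalized local convexity. `Df i` stands for the subdifferential `∂f_i(x̄)`. -/
theorem sufficient_condition_strict
    {X : Type*} [NormedAddCommGroup X] [NormedSpace ℝ X] [CompleteSpace X]
    {p : ℕ} (Ω : Set X) (f : Fin p → X → ℝ) (U : Fin p → Set (X →L[ℝ] ℝ))
    (Df : Fin p → Set (X →L[ℝ] ℝ)) (xb : X) (hxb : xb ∈ Ω)
    (hno : ¬ ∃ d : X, ∃ u : Fin p → (X →L[ℝ] ℝ), (∀ i, u i ∈ U i) ∧
      ∀ i, ∀ xst ∈ Df i, (xst : X →L[ℝ] ℝ) d - u i d < 0)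
    (hconv : ∃ δ > (0 : ℝ), ∀ x ∈ Ω ∩ Metric.ball xb δ, x ≠ xb →
      ∀ u : Fin p → (X →L[ℝ] ℝ), (∀ i, u i ∈ U i) → ∃ d : X,
        ∀ i, ∀ xst ∈ Df i, (xst : X →L[ℝ] ℝ) d - u i d <
          (f i x - u i x) - (f i xb - u i xb)) :
    ∃ δ > (0 : ℝ), ∀ u : Fin p → (X →L[ℝ] ℝ), (∀ i, u i ∈ U i) →
      ¬ ∃ x ∈ Ω ∩ Metric.ball xb δ, x ≠ xb ∧
        ∀ i, f i x - u i x ≤ f i xb - u i xb := by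
  obtain ⟨δ, hδ, h⟩ := hconv
  refine ⟨δ, hδ, fun u hu ⟨x, hx, hne, hle⟩ => ?_⟩
  obtain ⟨d, hd⟩ := h x hx hne u hu
  exact hno ⟨d, u, hu, fun i xst hxst =>
    lt_of_lt_of_le (hd i xst hxst) (by linarith [hle i])⟩
end

section
/- Suppose the highly robust KKT conditions hold at x̄ ∈ Ω for (P_U) with robust feasible set Ω = { x : g_j(x, v_j) ≤ 0 ∀ v_j ∈ V_j, j ∈ J }, and that (f, g) is generalized locally convex at x̄. Then x̄ is a local highly robust weakly efficient solution of (P_U). -/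
/-!
If a feasible `x` near `x̄` strictly decreased every `f i - u i`, test the KKT identity
`∑ λᵢ uᵢ = ∑ λᵢ xᵢ* + ∑ μⱼ yⱼ*` against the direction `d` given by generalized local convexity.
The `f`-part gives `∑ λᵢ (uᵢ d - xᵢ* d) > 0`, as `λ` is a probability vector. For the
constraints, the half-space `{φ | φ d ≤ Gⱼ x - Gⱼ x̄}` is weak*-closed and convex and contains every
active subgradient (because `gⱼ x v ≤ Gⱼ x` and `gⱼ x̄ v = Gⱼ x̄` for active `v`), hence contains
`yⱼ*`; complementary slackness and feasibility then give `μⱼ yⱼ* d ≤ μⱼ Gⱼ x ≤ 0`.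
-/

open Finset

namespace WeakDual

variable {E : Type*} [AddCommMonoid E] [TopologicalSpace E] [Module ℝ E]

theorem apply_le_of_mem_closure_convexHull {s : Set (WeakDual ℝ E)} {d : E} {c : ℝ}
    (hs : ∀ φ ∈ s, φ d ≤ c) {φ : WeakDual ℝ E} (hφ : φ ∈ closure (convexHull ℝ s)) :
    φ d ≤ c := by
  have hclosed : IsClosed {ψ : WeakDual ℝ E | ψ d ≤ c} :=
    isClosed_le (eval_continuous d) continuous_const
  have hconvex : Convex ℝ {ψ : WeakDual ℝ E | ψ d ≤ c} :=
    convex_halfSpace_le ⟨fun _ _ => rfl, fun _ _ => rfl⟩ c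
  exact closure_minimal (convexHull_min hs hconvex) hclosed hφ

theorem apply_le_sub_of_mem_closure_convexHull_active {V : Type*} {gx gxb : V → ℝ}
    {Gx Gxb : ℝ} (hGx : ∀ v, gx v ≤ Gx) {D : V → Set (WeakDual ℝ E)} {d : E}
    (hD : ∀ v ∈ {v | gxb v = Gxb}, ∀ φ ∈ D v, φ d ≤ gx v - gxb v) {φ : WeakDual ℝ E}
    (hφ : φ ∈ closure (convexHull ℝ (⋃ v ∈ {v | gxb v = Gxb}, D v))) :
    φ d ≤ Gx - Gxb := by
  refine apply_le_of_mem_closure_convexHull ?_ hφ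
  simp only [Set.mem_iUnion]
  rintro ψ ⟨v, hv : gxb v = Gxb, hψ⟩
  linarith [hD v hv ψ hψ, hGx v]

end WeakDual

theorem Finset.sum_mul_pos_of_sum_eq_one {R ι : Type*} [CommSemiring R] [LinearOrder R]
    [IsStrictOrderedRing R] {t : Finset ι} {w a : ι → R}
    (hw : ∀ i ∈ t, 0 ≤ w i) (hw1 : ∑ i ∈ t, w i = 1) (ha : ∀ i ∈ t, 0 < a i) :
    0 < ∑ i ∈ t, w i * a i := by
  obtain ⟨i, hi, hwi⟩ : ∃ i ∈ t, 0 < w i :=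
    exists_lt_of_sum_lt (by simp [hw1] : ∑ i ∈ t, (0 : R) < ∑ i ∈ t, w i)
  exact sum_pos' (fun j hj => mul_nonneg (hw j hj) (ha j hj).le) ⟨i, hi, mul_pos hwi (ha i hi)⟩

theorem local_highly_robust_weak_of_KKT_general
    {X : Type*} [NormedAddCommGroup X] [NormedSpace ℝ X]
    {p q : ℕ} (f : Fin p → X → ℝ)
    (V : Fin q → Type*)
    (g : ∀ j : Fin q, X → V j → ℝ)
    (hbdd : ∀ j x, BddAbove (Set.range (g j x)))
    (U : Fin p → Set (WeakDual ℝ X))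
    (Df : Fin p → Set (WeakDual ℝ X)) (Dg : ∀ j, V j → Set (WeakDual ℝ X))
    (Ω : Set X) (hΩ : Ω = {x | ∀ j, ∀ v : V j, g j x v ≤ 0})
    (G : Fin q → X → ℝ) (hG : ∀ j x, G j x = ⨆ v : V j, g j x v)
    (xb : X)
    (hKKT : ∀ u : Fin p → WeakDual ℝ X, (∀ i, u i ∈ U i) →
      ∃ (lam : Fin p → ℝ) (mu : Fin q → ℝ),
        (∀ i, 0 ≤ lam i) ∧ (∑ i, lam i) = 1 ∧ (∀ j, 0 ≤ mu j) ∧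
        (∀ j, mu j * G j xb = 0) ∧
        ∃ (xs : Fin p → WeakDual ℝ X) (ys : Fin q → WeakDual ℝ X),
          (∀ i, xs i ∈ Df i) ∧
          (∀ j, ys j ∈ closure (convexHull ℝ
            (⋃ v ∈ {v : V j | g j xb v = G j xb}, Dg j v))) ∧
          (∑ i, lam i • u i) = (∑ i, lam i • xs i) + (∑ j, mu j • ys j))
    (hconv : ∃ δ > (0 : ℝ), ∀ x ∈ Ω ∩ Metric.ball xb δ,
      ∀ u : Fin p → WeakDual ℝ X, (∀ i, u i ∈ U i) → ∃ d : X,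
        (∀ i, ∀ xst ∈ Df i, (xst : WeakDual ℝ X) d - u i d ≤
          (f i x - u i x) - (f i xb - u i xb)) ∧
        (∀ j, ∀ v ∈ {v : V j | g j xb v = G j xb}, ∀ xst ∈ Dg j v,
          (xst : WeakDual ℝ X) d ≤ g j x v - g j xb v)) :
    ∃ δ > (0 : ℝ), ∀ u : Fin p → WeakDual ℝ X, (∀ i, u i ∈ U i) →
      ¬ ∃ x ∈ Ω ∩ Metric.ball xb δ, ∀ i, f i x - u i x < f i xb - u i xb := by
  obtain ⟨δ, hδ, hlocal⟩ := hconv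
  refine ⟨δ, hδ, fun u hu ⟨x, hx, hlt⟩ => ?_⟩
  obtain ⟨d, hdf, hdg⟩ := hlocal x hx u hu
  obtain ⟨lam, mu, hlam, hlam1, hmu, hcompl, xs, ys, hxs, hys, hsum⟩ := hKKT u hu
  have hgx : ∀ j v, g j x v ≤ G j x := fun j v => hG j x ▸ le_ciSup (hbdd j x) v
  have hGx : ∀ j, G j x ≤ 0 := fun j => hG j x ▸ Real.iSup_nonpos ((hΩ ▸ hx.1) j)
  have hys_d : ∀ j, ys j d ≤ G j x - G j xb := fun j =>
    WeakDual.apply_le_sub_of_mem_closure_convexHull_active (hgx j) (hdg j) (hys j)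
  have hpos : 0 < ∑ i, lam i * (u i d - xs i d) :=
    sum_mul_pos_of_sum_eq_one (fun i _ => hlam i) hlam1
      fun i _ => by linarith [hdf i (xs i) (hxs i), hlt i]
  have hnonpos : ∑ j, mu j * ys j d ≤ 0 := sum_nonpos fun j _ =>
    calc mu j * ys j d ≤ mu j * (G j x - G j xb) := mul_le_mul_of_nonneg_left (hys_d j) (hmu j)
      _ = mu j * G j x := by linear_combination -hcompl j
      _ ≤ 0 := mul_nonpos_of_nonneg_of_nonpos (hmu j) (hGx j)
  have heval : ∑ i, lam i * u i d = ∑ i, lam i * xs i d + ∑ j, mu j * ys j d := by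
    simpa only [map_add, map_sum, map_smul, add_apply, FunLike.coe_sum, Finset.sum_apply,
      smul_apply, WeakDual.toStrongDual_apply, smul_eq_mul]
      using congrArg (fun φ => WeakDual.toStrongDual φ d) hsum
  rw [← sub_eq_iff_eq_add', ← sum_sub_distrib] at heval
  simp only [mul_sub] at hpos
  linarith

/-- If the highly robust KKT conditions hold at `x̄` and `(f, g)` is
generalized locally convex at `x̄`, then `x̄` is a local highly robust weakly
efficient solution of `(P_U)`. Here `Df i = ∂f_i(x̄)` and `Dg j v = ∂_x g_j(x̄, v)`
are the relevant subdifferentials, `G j = sup_v g j · v`, and the robust feasible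
set is `Ω = {x : g j x v ≤ 0 ∀ j, v}`. -/
theorem local_highly_robust_weak_of_KKT
    {X : Type*} [NormedAddCommGroup X] [NormedSpace ℝ X] [CompleteSpace X]
    {p q : ℕ} (f : Fin p → X → ℝ)
    (V : Fin q → Type*) [∀ j, Nonempty (V j)]
    (g : ∀ j : Fin q, X → V j → ℝ)
    (hbdd : ∀ j x, BddAbove (Set.range (g j x)))
    (U : Fin p → Set (WeakDual ℝ X))
    (Df : Fin p → Set (WeakDual ℝ X)) (Dg : ∀ j, V j → Set (WeakDual ℝ X))
    (Ω : Set X) (hΩ : Ω = {x | ∀ j, ∀ v : V j, g j x v ≤ 0})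
    (G : Fin q → X → ℝ) (hG : ∀ j x, G j x = ⨆ v : V j, g j x v)
    (xb : X) (hxb : xb ∈ Ω)
    (hKKT : ∀ u : Fin p → WeakDual ℝ X, (∀ i, u i ∈ U i) →
      ∃ (lam : Fin p → ℝ) (mu : Fin q → ℝ),
        (∀ i, 0 ≤ lam i) ∧ (∑ i, lam i) = 1 ∧ (∀ j, 0 ≤ mu j) ∧
        (∀ j, mu j * G j xb = 0) ∧
        ∃ (xs : Fin p → WeakDual ℝ X) (ys : Fin q → WeakDual ℝ X),
          (∀ i, xs i ∈ Df i) ∧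
          (∀ j, ys j ∈ closure (convexHull ℝ
            (⋃ v ∈ {v : V j | g j xb v = G j xb}, Dg j v))) ∧
          (∑ i, lam i • u i) = (∑ i, lam i • xs i) + (∑ j, mu j • ys j))
    (hconv : ∃ δ > (0 : ℝ), ∀ x ∈ Ω ∩ Metric.ball xb δ,
      ∀ u : Fin p → WeakDual ℝ X, (∀ i, u i ∈ U i) → ∃ d : X,
        (∀ i, ∀ xst ∈ Df i, (xst : WeakDual ℝ X) d - u i d ≤
          (f i x - u i x) - (f i xb - u i xb)) ∧
        (∀ j, ∀ v ∈ {v : V j | g j xb v = G j xb}, ∀ xst ∈ Dg j v,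
          (xst : WeakDual ℝ X) d ≤ g j x v - g j xb v)) :
    ∃ δ > (0 : ℝ), ∀ u : Fin p → WeakDual ℝ X, (∀ i, u i ∈ U i) →
      ¬ ∃ x ∈ Ω ∩ Metric.ball xb δ, ∀ i, f i x - u i x < f i xb - u i xb :=
  local_highly_robust_weak_of_KKT_general f V g hbdd U Df Dg Ω hΩ G hG xb hKKT hconv
end

section
/- Let X be a Hilbert space, Ω ⊆ X, f_i : X → ℝ, and suppose the closed ball of radius L > 0 centered at 0 is contained in each U_i ⊆ X = X*. If x̄ ∈ Ω is a highly robust weakly efficient solution of (P_U), then for every L̄ ∈ (0, L), x̄ is an isolated efficient solution of the nominal problem with constant L̄: max_{i∈I} (f_i(x) − f_i(x̄)) ≥ L̄‖x − x̄‖ for all x ∈ Ω. -/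
open RealInnerProductSpace

theorem exists_norm_le_inner_eq_mul_norm {E : Type*} [NormedAddCommGroup E]
    [InnerProductSpace ℝ E] (v : E) {r : ℝ} (hr : 0 ≤ r) :
    ∃ u : E, ‖u‖ ≤ r ∧ ⟪u, v⟫ = r * ‖v‖ := by
  rcases eq_or_ne v 0 with rfl | hv
  · exact ⟨0, by simpa using hr, by simp⟩
  replace hv : ‖v‖ ≠ 0 := norm_ne_zero_iff.2 hv
  refine ⟨(r / ‖v‖) • v, ?_, ?_⟩
  · rw [norm_smul, Real.norm_of_nonneg (by positivity), div_mul_cancel₀ r hv]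
  · rw [real_inner_smul_left, real_inner_self_eq_norm_sq]
    field_simp

theorem exists_inner_sub_le_sub_of_robust {E ι : Type*} [NormedAddCommGroup E]
    [InnerProductSpace ℝ E] {Ω : Set E} {f : ι → E → ℝ} {U : ι → Set E} {xb : E}
    (hrob : ∀ u : ι → E, (∀ i, u i ∈ U i) →
      ¬ ∃ x ∈ Ω, ∀ i, f i x - ⟪u i, x⟫ < f i xb - ⟪u i, xb⟫)
    {u : E} (hu : ∀ i, u ∈ U i) {x : E} (hx : x ∈ Ω) :
    ∃ i, ⟪u, x - xb⟫ ≤ f i x - f i xb := by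
  push Not at hrob
  obtain ⟨i, hi⟩ := hrob (fun _ => u) hu x hx
  exact ⟨i, by rw [inner_sub_right]; linarith⟩

theorem isolated_of_highly_robust_ball_general
    {X : Type*} [NormedAddCommGroup X] [InnerProductSpace ℝ X]
    {p : ℕ} (Ω : Set X) (f : Fin p → X → ℝ) (U : Fin p → Set X)
    (L : ℝ) (hball : ∀ i, Metric.closedBall (0 : X) L ⊆ U i)
    (xb : X)
    (hrob : ∀ u : Fin p → X, (∀ i, u i ∈ U i) →
      ¬ ∃ x ∈ Ω, ∀ i, f i x - (inner ℝ (u i) x : ℝ) < f i xb - (inner ℝ (u i) xb : ℝ)) :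
    ∀ Lb : ℝ, 0 < Lb → Lb < L →
      ∀ x ∈ Ω, ∃ i, Lb * ‖x - xb‖ ≤ f i x - f i xb := by
  intro Lb hLb hLbL x hx
  obtain ⟨u, hu_norm, hu_inner⟩ := exists_norm_le_inner_eq_mul_norm (x - xb) hLb.le
  have hu : ∀ i, u ∈ U i := fun i =>
    hball i (mem_closedBall_zero_iff.2 (hu_norm.trans hLbL.le))
  simpa only [hu_inner] using exists_inner_sub_le_sub_of_robust hrob hu hx

/-- In a Hilbert space, if the closed ball of radius `L` is contained
in each uncertainty set and `x̄` is highly robust weakly efficient, then `x̄` is an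
isolated efficient solution of the nominal problem with any constant `L̄ < L`. -/
theorem isolated_of_highly_robust_ball
    {X : Type*} [NormedAddCommGroup X] [InnerProductSpace ℝ X] [CompleteSpace X]
    {p : ℕ} (Ω : Set X) (f : Fin p → X → ℝ) (U : Fin p → Set X)
    (L : ℝ) (hL : 0 < L) (hball : ∀ i, Metric.closedBall (0 : X) L ⊆ U i)
    (xb : X) (hxb : xb ∈ Ω)
    (hrob : ∀ u : Fin p → X, (∀ i, u i ∈ U i) →
      ¬ ∃ x ∈ Ω, ∀ i, f i x - (inner ℝ (u i) x : ℝ) < f i xb - (inner ℝ (u i) xb : ℝ)) :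
    ∀ Lb : ℝ, 0 < Lb → Lb < L →
      ∀ x ∈ Ω, ∃ i, Lb * ‖x - xb‖ ≤ f i x - f i xb :=
  isolated_of_highly_robust_ball_general Ω f U L hball xb hrob
end

section
/- Let X be a Banach space, Ω ⊆ X, f_i : X → ℝ, and for each i ∈ I let U_i = co U_i^{ep} + co cone U_i^{ed} with finite sets U_i^{ep} = {w_1^i,…,w_{s_i}^i} ⊆ X* and U_i^{ed} = {d_1^i,…,d_{r_i}^i} ⊆ X*. Define U_i^{epd} := { w_k^i + γ d_t^i : 1 ≤ k ≤ s_i, 1 ≤ t ≤ r_i, γ ≥ 0 } and U^{epd} := ∏_i U_i^{epd}. Then x̄ ∈ Ω is a highly robust efficient solution of (P_U) (with U = ∏ U_i) if and only if x̄ is a highly robust efficient solution of (P_{U^{epd}}). -/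
private lemma epd_key {X : Type*} [NormedAddCommGroup X] [NormedSpace ℝ X]
    {n m : ℕ} (hn : 0 < n) (hm : 0 < m)
    (w : Fin n → X →L[ℝ] ℝ) (dv : Fin m → X →L[ℝ] ℝ)
    (α : Fin n → ℝ) (hα : ∀ k, 0 ≤ α k) (hα1 : ∑ k, α k = 1)
    (β : Fin m → ℝ) (hβ : ∀ t, 0 ≤ β t) (y : X) :
    ∃ (k : Fin n) (t : Fin m) (γ : ℝ), 0 ≤ γ ∧
      ((∑ k, α k • w k) + (∑ t, β t • dv t)) y ≤ (w k + γ • dv t) y := by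
  obtain ⟨K, -, hK⟩ := Finset.exists_max_image Finset.univ (fun k => w k y)
    ⟨⟨0, hn⟩, Finset.mem_univ _⟩
  have h1 : (∑ k, α k • w k) y ≤ w K y := by
    rw [ContinuousLinearMap.sum_apply]
    calc ∑ k, (α k • w k) y = ∑ k, α k * w k y := by
          simp [ContinuousLinearMap.smul_apply, smul_eq_mul]
      _ ≤ ∑ k, α k * w K y := by
          refine Finset.sum_le_sum fun k _ => ?_
          exact mul_le_mul_of_nonneg_left (hK k (Finset.mem_univ _)) (hα k)
      _ = w K y := by rw [← Finset.sum_mul, hα1, one_mul]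
  set S : ℝ := ∑ t, β t * dv t y with hS
  have hsum2 : (∑ t, β t • dv t) y = S := by
    rw [ContinuousLinearMap.sum_apply]
    simp [ContinuousLinearMap.smul_apply, smul_eq_mul, hS]
  by_cases hSle : S ≤ 0
  · refine ⟨K, ⟨0, hm⟩, 0, le_refl 0, ?_⟩
    simp only [ContinuousLinearMap.add_apply, hsum2, zero_smul, zero_add, add_zero]
    linarith
  · push_neg at hSle
    have : ∃ t, 0 < β t * dv t y := by
      by_contra h
      push_neg at h
      have : S ≤ 0 := Finset.sum_nonpos fun t _ => h t
      linarith
    obtain ⟨T, hT⟩ := this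
    have hβT : 0 < β T := by
      rcases lt_or_eq_of_le (hβ T) with h | h
      · exact h
      · exfalso; rw [← h] at hT; simp at hT
    have hdT : 0 < dv T y := by nlinarith [hβ T]
    refine ⟨K, T, S / dv T y, le_of_lt (div_pos hSle hdT), ?_⟩
    simp only [ContinuousLinearMap.add_apply, hsum2, ContinuousLinearMap.smul_apply,
      smul_eq_mul]
    rw [div_mul_cancel₀ _ (ne_of_gt hdT)]
    linarith

/-- For polyhedral uncertainty sets
`U_i = co{w_1^i,…,w_{s_i}^i} + co cone{d_1^i,…,d_{r_i}^i}`, a point `x̄` is highly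
robust efficient for `(P_U)` iff it is highly robust efficient for `(P_{U^{epd}})`,
where `U_i^{epd} = { w_k^i + γ d_t^i : γ ≥ 0 }`. -/
theorem highly_robust_polyhedral_reduction
    {X : Type*} [NormedAddCommGroup X] [NormedSpace ℝ X] [CompleteSpace X]
    {p : ℕ} (Ω : Set X) (f : Fin p → X → ℝ)
    (s r : Fin p → ℕ) (hs : ∀ i, 0 < s i) (hr : ∀ i, 0 < r i)
    (w : ∀ i : Fin p, Fin (s i) → X →L[ℝ] ℝ)
    (dv : ∀ i : Fin p, Fin (r i) → X →L[ℝ] ℝ)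
    (U : Fin p → Set (X →L[ℝ] ℝ))
    (hU : ∀ i, U i = {u | ∃ α : Fin (s i) → ℝ, (∀ k, 0 ≤ α k) ∧ (∑ k, α k) = 1 ∧
      ∃ β : Fin (r i) → ℝ, (∀ t, 0 ≤ β t) ∧
        u = (∑ k, α k • w i k) + (∑ t, β t • dv i t)})
    (Uepd : Fin p → Set (X →L[ℝ] ℝ))
    (hUepd : ∀ i, Uepd i = {u | ∃ k : Fin (s i), ∃ t : Fin (r i), ∃ γ : ℝ,
      0 ≤ γ ∧ u = w i k + γ • dv i t})
    (xb : X) (hxb : xb ∈ Ω) :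
    (∀ u : Fin p → (X →L[ℝ] ℝ), (∀ i, u i ∈ U i) →
        ¬ ∃ x ∈ Ω, (∀ i, f i x - u i x ≤ f i xb - u i xb) ∧
          (∃ i, f i x - u i x < f i xb - u i xb)) ↔
    (∀ u : Fin p → (X →L[ℝ] ℝ), (∀ i, u i ∈ Uepd i) →
        ¬ ∃ x ∈ Ω, (∀ i, f i x - u i x ≤ f i xb - u i xb) ∧
          (∃ i, f i x - u i x < f i xb - u i xb)) := by
  constructor
  · -- Uepd ⊆ U
    intro H u hu
    refine H u fun i => ?_
    rw [hU i]
    obtain ⟨k, t, γ, hγ, hui⟩ := (hUepd i) ▸ hu i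
    refine ⟨fun k' => if k' = k then 1 else 0, fun k' => by dsimp; split <;> norm_num, by simp, 
      fun t' => if t' = t then γ else 0, fun t' => by dsimp; split <;> simp [hγ], ?_⟩
    rw [hui]
    congr 1
    · rw [Finset.sum_eq_single k]
      · simp
      · intro k' _ hne; simp [hne]
      · intro h; exact absurd (Finset.mem_univ k) h
    · rw [Finset.sum_eq_single t]
      · simp
      · intro t' _ hne; simp [hne]
      · intro h; exact absurd (Finset.mem_univ t) h
  · -- converse
    intro H u hu ⟨x, hx, hle, i0, hlt⟩
    -- for each i, pick epd element dominating u i at y := x - xb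
    have key : ∀ i, ∃ v ∈ Uepd i, u i (x - xb) ≤ v (x - xb) := by
      intro i
      have hui' := hu i
      rw [hU i] at hui'
      obtain ⟨α, hα, hα1, β, hβ, hui⟩ := hui'
      obtain ⟨k, t, γ, hγ, hle'⟩ := epd_key (hs i) (hr i) (w i) (dv i) α hα hα1 β hβ (x - xb)
      exact ⟨w i k + γ • dv i t, (hUepd i) ▸ ⟨k, t, γ, hγ, rfl⟩, hui ▸ hle'⟩
    choose v hv hvle using key
    refine H v hv ⟨x, hx, fun i => ?_, i0, ?_⟩
    · have h1 := hle i
      have h2 := hvle i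
      simp only [map_sub] at h2
      linarith
    · have h2 := hvle i0
      simp only [map_sub] at h2
      linarith
end
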